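/- Fix K and L, and let C1 and C2 be refinement configurations for hops 0,...,K and iterations 0,...,L satisfying: C1^l_0 = C2^l_0 = {l} for every l ≤ L, and for every l ≤ L and every k ∈ {1,...,K} the sets C1^l_k and C2^l_k are empty or singletons, with C1^l_k nonempty whenever C2^l_k is nonempty, and whenever C1^l_k = {i} and C2^l_k = {j} one has i ≥ j. Then C1 is at least as powerful as C2 at every iteration l ≤ L: for all finite simple graphs G1, G2 and vertices v ∈ G1, u ∈ G2, if v ≈^{C1}_l u then v ≈^{C2}_l u. -/
import Mathlib


/-!
STATEMENT 6: If C1 and C2 are refinement configurations with C1^l_0 = C2^l_0 = {l},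
all other hop-sets empty or singletons, C1^l_k nonempty whenever C2^l_k is nonempty,
and the singleton of C1^l_k at least that of C2^l_k, then C1 is at least as powerful
as C2 at every iteration l ≤ L.
-/

namespace KHopStmt6

/-- k-th hop neighbors under the shortest-path-distance kernel: vertices at graph
distance exactly `k` from `v` (so `Qspd G v 0 = {v}`). -/
noncomputable def Qspd {V : Type*} [Fintype V] (G : SimpleGraph V) (v : V) (k : ℕ) :
    Finset V := by
  classical
  exact Finset.univ.filter fun u => G.Reachable v u ∧ G.dist v u = k

/-- The general K-hop shortest-path-distance color refinement determined by a
refinement configuration `C`: `v ≈^C_0 u` always, and `v ≈^C_{l+1} u` iff for every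
`k ≤ K` and every `s ∈ C l k` there is a bijection of the k-th hop neighborhoods
matching `≈^C_s`-equivalent vertices. (The guard `s ≤ l` is automatic for genuine
refinement configurations and makes the recursion well-founded.) -/
def CREquiv {V1 V2 : Type*} [Fintype V1] [Fintype V2] (K : ℕ) (C : ℕ → ℕ → Finset ℕ)
    (G1 : SimpleGraph V1) (G2 : SimpleGraph V2) : ℕ → V1 → V2 → Prop
  | 0, _, _ => True
  | (l + 1), v, u =>
      ∀ k ≤ K, ∀ s ∈ C l k, s ≤ l →
        ∃ σ : {w // w ∈ Qspd G1 v k} ≃ {w // w ∈ Qspd G2 u k},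
          ∀ w : {w // w ∈ Qspd G1 v k}, CREquiv K C G1 G2 s w.1 (σ w).1
  termination_by l => l
  decreasing_by omega

lemma Qspd_zero {V : Type*} [Fintype V] (G : SimpleGraph V) (v : V) :
    Qspd G v 0 = {v} := by
  classical
  ext w
  simp only [Qspd, Finset.mem_filter, Finset.mem_univ, true_and, Finset.mem_singleton]
  constructor
  · rintro ⟨hr, hd⟩
    exact (hr.dist_eq_zero_iff.mp hd).symm
  · rintro rfl
    exact ⟨SimpleGraph.Reachable.refl _, SimpleGraph.dist_self⟩

lemma crequiv_step (K : ℕ) (C : ℕ → ℕ → Finset ℕ) {V1 V2 : Type*}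
    [Fintype V1] [Fintype V2]
    (G1 : SimpleGraph V1) (G2 : SimpleGraph V2) (l : ℕ) (hC : C l 0 = {l})
    (v : V1) (u : V2) (h : CREquiv K C G1 G2 (l + 1) v u) :
    CREquiv K C G1 G2 l v u := by
  rw [CREquiv] at h
  obtain ⟨σ, hσ⟩ := h 0 (Nat.zero_le K) l (by simp [hC]) le_rfl
  have hv : v ∈ Qspd G1 v 0 := by simp [Qspd_zero]
  have hmain := hσ ⟨v, hv⟩
  have hu : ((σ ⟨v, hv⟩ : {w // w ∈ Qspd G2 u 0}) : V2) = u := by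
    have h2 := (σ ⟨v, hv⟩).2
    simp only [Qspd, Finset.mem_filter, Finset.mem_univ, true_and] at h2
    exact (h2.1.dist_eq_zero_iff.mp h2.2).symm
  rwa [hu] at hmain

lemma crequiv_mono (K : ℕ) (C : ℕ → ℕ → Finset ℕ) (L : ℕ)
    (hC : ∀ l ≤ L, C l 0 = {l}) {V1 V2 : Type*} [Fintype V1] [Fintype V2]
    (G1 : SimpleGraph V1) (G2 : SimpleGraph V2) :
    ∀ i, i ≤ L → ∀ j ≤ i, ∀ v u, CREquiv K C G1 G2 i v u → CREquiv K C G1 G2 j v u := by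
  intro i
  induction i with
  | zero =>
    intro _ j hj v u h
    interval_cases j
    exact h
  | succ m IH =>
    intro hi j hj v u h
    rcases Nat.eq_or_lt_of_le hj with rfl | hlt
    · exact h
    · have hm : CREquiv K C G1 G2 m v u :=
        crequiv_step K C G1 G2 m (hC m (by omega)) v u h
      exact IH (by omega) j (by omega) v u hm

/-- Suppose `C1^l_0 = C2^l_0 = {l}` for every `l ≤ L`, and for every
`l ≤ L` and `k ∈ {1,…,K}` the sets `C1^l_k` and `C2^l_k` are empty or singletons, with
`C1^l_k` nonempty whenever `C2^l_k` is nonempty, and `i ≥ j` whenever `C1^l_k = {i}`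
and `C2^l_k = {j}`. Then `C1` is at least as powerful as `C2` at every iteration
`l ≤ L`: for all finite simple graphs and vertices, `v ≈^{C1}_l u` implies
`v ≈^{C2}_l u`. -/
theorem refinement_config_later_iterations_stronger (K L : ℕ)
    (C1 C2 : ℕ → ℕ → Finset ℕ)
    (hC1 : ∀ l ≤ L, ∀ k ≤ K, ∀ s ∈ C1 l k, s ≤ l)
    (hC2 : ∀ l ≤ L, ∀ k ≤ K, ∀ s ∈ C2 l k, s ≤ l)
    (hzero : ∀ l ≤ L, C1 l 0 = {l} ∧ C2 l 0 = {l})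
    (hsingle1 : ∀ l ≤ L, ∀ k, 1 ≤ k → k ≤ K → C1 l k = ∅ ∨ ∃ i, C1 l k = {i})
    (hsingle2 : ∀ l ≤ L, ∀ k, 1 ≤ k → k ≤ K → C2 l k = ∅ ∨ ∃ j, C2 l k = {j})
    (hnonempty : ∀ l ≤ L, ∀ k, 1 ≤ k → k ≤ K → (C2 l k).Nonempty → (C1 l k).Nonempty)
    (hge : ∀ l ≤ L, ∀ k, 1 ≤ k → k ≤ K → ∀ i j, C1 l k = {i} → C2 l k = {j} → j ≤ i) :
    ∀ l ≤ L, ∀ (V1 V2 : Type) [Fintype V1] [Fintype V2]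
      (G1 : SimpleGraph V1) (G2 : SimpleGraph V2) (v : V1) (u : V2),
      CREquiv K C1 G1 G2 l v u → CREquiv K C2 G1 G2 l v u := by
  intro l
  induction l using Nat.strong_induction_on with
  | _ l IH =>
    intro hl V1 V2 _ _ G1 G2 v u h
    cases l with
    | zero => rw [CREquiv]; trivial
    | succ m =>
      have hmL : m ≤ L := by omega
      rw [CREquiv] at h ⊢
      intro k hk s hs hsl
      cases Nat.eq_zero_or_pos k with
      | inl hk0 =>
        subst hk0
        have hs' : s = m := by
          have h20 := (hzero m hmL).2
          rw [h20] at hs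
          simpa using hs
        obtain ⟨σ, hσ⟩ := h 0 (Nat.zero_le K) m (by simp [(hzero m hmL).1]) le_rfl
        subst hs'
        exact ⟨σ, fun w => IH s (Nat.lt_succ_self s) hmL V1 V2 G1 G2 w.1 (σ w).1 (hσ w)⟩
      | inr hk1 =>
        have hne2 : (C2 m k).Nonempty := ⟨s, hs⟩
        have hne1 : (C1 m k).Nonempty := hnonempty m hmL k hk1 hk hne2
        obtain ⟨i, hi⟩ := (hsingle1 m hmL k hk1 hk).resolve_left (by
          intro hemp
          rw [hemp] at hne1
          exact absurd hne1 (by simp))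
        have hj : C2 m k = {s} := by
          rcases hsingle2 m hmL k hk1 hk with hemp | ⟨j, hj⟩
          · rw [hemp] at hs; simp at hs
          · rw [hj] at hs
            simp only [Finset.mem_singleton] at hs
            rw [hj, hs]
        have hsi : s ≤ i := hge m hmL k hk1 hk i s hi hj
        have him : i ≤ m := hC1 m hmL k hk i (by simp [hi])
        obtain ⟨σ, hσ⟩ := h k hk i (by simp [hi]) him
        refine ⟨σ, fun w => ?_⟩
        have hi1 : CREquiv K C1 G1 G2 s w.1 (σ w).1 :=
          crequiv_mono K C1 L (fun l hl' => (hzero l hl').1) G1 G2 i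
            (le_trans him hmL) s hsi w.1 (σ w).1 (hσ w)
        exact IH s (by omega) (by omega) V1 V2 G1 G2 w.1 (σ w).1 hi1

end KHopStmt6
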